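/- The SSPERK(4,3) method satisfies the SSP conditions at parameter r = 2: with K = [[A, 0], [bᵀ, 0]] ∈ ℝ^{5×5}, every entry of K(I + 2K)^{-1} is nonnegative and every component of 2K(I + 2K)^{-1}e is at most 1. Hence the SSP coefficient of SSPERK(4,3) is at least 2. -/

import Mathlib

open Matrix

/-- The matrix `K = [[A, 0], [bᵀ, 0]] ∈ ℝ^{(s+1)×(s+1)}`. -/
noncomputable def mkK {s : ℕ} (A : Matrix (Fin s) (Fin s) ℝ) (b : Fin s → ℝ) :
    Matrix (Fin (s + 1)) (Fin (s + 1)) ℝ :=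
  Matrix.of fun i j =>
    if hj : (j : ℕ) < s then
      if hi : (i : ℕ) < s then A ⟨i, hi⟩ ⟨j, hj⟩ else b ⟨j, hj⟩
    else 0

/-- Coefficient matrix of the optimal SSPERK(4,3) method. -/
noncomputable def A43 : Matrix (Fin 4) (Fin 4) ℝ :=
  !![0, 0, 0, 0;
     1/2, 0, 0, 0;
     1/2, 1/2, 0, 0;
     1/6, 1/6, 1/6, 0]

/-- Weights of the optimal SSPERK(4,3) method. -/
noncomputable def b43 : Fin 4 → ℝ := ![1/6, 1/6, 1/6, 1/2]

/-!
Write `N = (I + rK)⁻¹`. Since `(I + rK) N = I`, we have `r K N = I - N`, so both SSP conditions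
are statements about `N` alone: `K N ≥ 0` says that `N` has diagonal at most `1` and nonpositive
off-diagonal entries, and `r K N e ≤ e` says that the row sums of `N` are nonnegative. For
SSPERK(4,3) at `r = 2`, `N` is lower bidiagonal with unit diagonal and nonpositive subdiagonal,
and its row sums are nonnegative.
-/

section SSP

variable {n : Type*} [Fintype n] [DecidableEq n]

def IsSSPAt (K : Matrix n n ℝ) (r : ℝ) : Prop :=
  (∀ i j, 0 ≤ (K * (1 + r • K)⁻¹) i j) ∧
    ∀ i, ((r • (K * (1 + r • K)⁻¹)) *ᵥ fun _ => 1) i ≤ 1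

theorem smul_mul_eq_one_sub_of_one_add_smul_mul_eq_one {K N : Matrix n n ℝ} {r : ℝ}
    (hN : (1 + r • K) * N = 1) : r • (K * N) = 1 - N := by
  rw [add_mul, one_mul, smul_mul_assoc] at hN
  exact eq_sub_of_add_eq' hN

theorem isSSPAt_of_one_add_smul_mul_eq_one {K N : Matrix n n ℝ} {r : ℝ} (hr : 0 < r)
    (hN : (1 + r • K) * N = 1) (hle : ∀ i j, N i j ≤ (1 : Matrix n n ℝ) i j)
    (hrow : ∀ i, 0 ≤ (N *ᵥ fun _ => 1) i) : IsSSPAt K r := by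
  have hKN : K * N = r⁻¹ • (1 - N) := by
    rw [← smul_mul_eq_one_sub_of_one_add_smul_mul_eq_one hN, inv_smul_smul₀ hr.ne']
  rw [IsSSPAt, inv_eq_right_inv hN, hKN, smul_inv_smul₀ hr.ne']
  refine ⟨fun i j => ?_, fun i => ?_⟩
  · rw [Matrix.smul_apply, Matrix.sub_apply, smul_eq_mul]
    exact mul_nonneg (inv_nonneg.2 hr.le) (sub_nonneg.2 (hle i j))
  · rw [sub_mulVec, one_mulVec, Pi.sub_apply]
    linarith [hrow i]

end SSP

theorem mkK_A43_b43 : mkK A43 b43 =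
    !![0, 0, 0, 0, 0;
       1/2, 0, 0, 0, 0;
       1/2, 1/2, 0, 0, 0;
       1/6, 1/6, 1/6, 0, 0;
       1/6, 1/6, 1/6, 1/2, 0] := by
  ext i j
  fin_cases i <;> fin_cases j <;> rfl

theorem one_add_two_smul_mkK_A43_b43 : 1 + (2 : ℝ) • mkK A43 b43 =
    !![1, 0, 0, 0, 0;
       1, 1, 0, 0, 0;
       1, 1, 1, 0, 0;
       1/3, 1/3, 1/3, 1, 0;
       1/3, 1/3, 1/3, 1, 1] := by
  rw [mkK_A43_b43]
  ext i j
  fin_cases i <;> fin_cases j <;> norm_num [one_apply, vecHead, vecTail, Fin.ext_iff]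

noncomputable def resolvent43 : Matrix (Fin 5) (Fin 5) ℝ :=
  !![1, 0, 0, 0, 0;
     -1, 1, 0, 0, 0;
     0, -1, 1, 0, 0;
     0, 0, -1/3, 1, 0;
     0, 0, 0, -1, 1]

theorem one_add_two_smul_mkK_mul_resolvent43 :
    (1 + (2 : ℝ) • mkK A43 b43) * resolvent43 = 1 := by
  rw [one_add_two_smul_mkK_A43_b43]
  ext i j
  fin_cases i <;> fin_cases j <;>
    norm_num [resolvent43, mul_apply, Fin.sum_univ_succ, one_apply, vecHead, vecTail, Fin.ext_iff]

theorem resolvent43_le_one (i j : Fin 5) :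
    resolvent43 i j ≤ (1 : Matrix (Fin 5) (Fin 5) ℝ) i j := by
  fin_cases i <;> fin_cases j <;> norm_num [resolvent43, one_apply]

theorem resolvent43_mulVec_one_nonneg (i : Fin 5) : 0 ≤ (resolvent43 *ᵥ fun _ => 1) i := by
  fin_cases i <;> norm_num [resolvent43, mulVec, dotProduct, Fin.sum_univ_succ]

/-- SSPERK(4,3) satisfies the SSP conditions at `r = 2`: with
`K = [[A, 0], [bᵀ, 0]] ∈ ℝ^{5×5}`, `K(I + 2K)⁻¹ ≥ 0` entrywise and
`2K(I + 2K)⁻¹ e ≤ e` componentwise; hence its SSP coefficient is at least `2`. -/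
theorem ssperk43_ssp_conditions :
    (∀ i j : Fin 5, 0 ≤ (mkK A43 b43 * (1 + (2 : ℝ) • mkK A43 b43)⁻¹) i j) ∧
    (∀ i : Fin 5,
      ((2 : ℝ) • (mkK A43 b43 * (1 + (2 : ℝ) • mkK A43 b43)⁻¹)).mulVec
        (fun _ => 1) i ≤ 1) :=
  isSSPAt_of_one_add_smul_mul_eq_one two_pos one_add_two_smul_mkK_mul_resolvent43
    resolvent43_le_one resolvent43_mulVec_one_nonneg
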